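/- arXiv:1202.1274 — 2 statements merged into one kernel-verified Lean document; each statement's English description precedes it below -/
import Mathlib

section
/- For any real number a > 0 and any real σ > 0, one has e^{-a} = (1/(2πi)) ∫_{σ-i∞}^{σ+i∞} a^{-t} Γ(t) dt, i.e. the inverse Mellin transform of the Gamma function is the exponential function. -/
/-!
Since `Γ` is the Mellin transform of `x ↦ e^{-x}`, the claim is the Mellin inversion formula for
this function. It applies because `Γ` is integrable along the line `Re s = σ`: applying
`‖Γ s‖ ≤ Γ(Re s)` to `Γ(s + 2) = (s + 1) s Γ(s)` gives `‖Γ(σ + iy)‖ = O(1 / (σ² + y²))`.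
-/

open Complex Filter MeasureTheory Topology

namespace Complex

lemma norm_Gamma_le_Gamma_re {s : ℂ} (hs : 0 < s.re) : ‖Gamma s‖ ≤ Real.Gamma s.re := by
  rw [Gamma_eq_integral hs, Real.Gamma_eq_integral hs, GammaIntegral]
  refine (norm_integral_le_integral_norm _).trans_eq (setIntegral_congr_fun measurableSet_Ioi
    fun x hx => ?_)
  rw [norm_mul, norm_cpow_eq_rpow_re_of_pos hx, norm_real,
    Real.norm_of_nonneg (Real.exp_pos _).le, sub_re, one_re]

lemma norm_Gamma_mul_norm_sq_le {s : ℂ} (hs : 0 < s.re) :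
    ‖Gamma s‖ * ‖s‖ ^ 2 ≤ Real.Gamma (s.re + 2) := by
  have hGamma : Gamma (s + 2) = (s + 1) * (s * Gamma s) := by
    rw [← Gamma_add_one s (ne_zero_of_re_pos hs),
      ← Gamma_add_one (s + 1) (ne_zero_of_re_pos (by simp; linarith)), add_assoc,
      one_add_one_eq_two]
  have hnorm : ‖s‖ ≤ ‖s + 1‖ := by
    rw [norm_def, norm_def]
    refine Real.sqrt_le_sqrt ?_
    simp only [normSq_apply, add_re, one_re, add_im, one_im, add_zero]
    nlinarith
  calc ‖Gamma s‖ * ‖s‖ ^ 2 = ‖s‖ * (‖s‖ * ‖Gamma s‖) := by ring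
    _ ≤ ‖s + 1‖ * (‖s‖ * ‖Gamma s‖) := by gcongr
    _ = ‖Gamma (s + 2)‖ := by rw [hGamma, norm_mul, norm_mul]
    _ ≤ Real.Gamma (s.re + 2) := by
      simpa using norm_Gamma_le_Gamma_re (s := s + 2) (by simp; linarith)

lemma differentiableAt_Gamma_of_re_pos {s : ℂ} (hs : 0 < s.re) : DifferentiableAt ℂ Gamma s :=
  differentiableAt_Gamma s fun m hm => by
    have := congrArg re hm
    simp only [neg_re, natCast_re] at this
    linarith [(Nat.cast_nonneg m : (0 : ℝ) ≤ m)]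

lemma continuous_Gamma_vertical {σ : ℝ} (hσ : 0 < σ) :
    Continuous fun y : ℝ => Gamma (σ + y * I) :=
  continuous_iff_continuousAt.2 fun y =>
    (differentiableAt_Gamma_of_re_pos (by simpa using hσ)).continuousAt.comp (by fun_prop)

lemma verticalIntegrable_Gamma {σ : ℝ} (hσ : 0 < σ) : VerticalIntegrable Gamma σ := by
  have hdecay : Integrable fun y : ℝ => Real.Gamma (σ + 2) / σ ^ 2 * (1 + (y / σ) ^ 2)⁻¹ :=
    (integrable_inv_one_add_sq.comp_div hσ.ne').const_mul _
  refine hdecay.mono' (continuous_Gamma_vertical hσ).aestronglyMeasurable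
    (Eventually.of_forall fun y => ?_)
  have hsq : ‖(σ : ℂ) + y * I‖ ^ 2 = σ ^ 2 + y ^ 2 := by
    rw [Complex.sq_norm, normSq_add_mul_I]
  have hpos : 0 < σ ^ 2 + y ^ 2 := by positivity
  have key := norm_Gamma_mul_norm_sq_le (s := σ + y * I) (by simpa using hσ)
  rw [hsq] at key
  simp only [add_re, ofReal_re, mul_re, I_re, mul_zero, ofReal_im, I_im, mul_one, sub_self,
    add_zero] at key
  calc ‖Gamma (σ + y * I)‖ ≤ Real.Gamma (σ + 2) / (σ ^ 2 + y ^ 2) := by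
        rwa [le_div_iff₀ hpos]
    _ = Real.Gamma (σ + 2) / σ ^ 2 * (1 + (y / σ) ^ 2)⁻¹ := by
        field_simp

lemma mellin_exp_neg {s : ℂ} (hs : 0 < s.re) :
    mellin (fun x : ℝ => (Real.exp (-x) : ℂ)) s = Gamma s := by
  rw [Gamma_eq_integral hs, GammaIntegral_eq_mellin]

lemma mellinConvergent_exp_neg {s : ℂ} (hs : 0 < s.re) :
    MellinConvergent (fun x : ℝ => (Real.exp (-x) : ℂ)) s :=
  (GammaIntegral_convergent hs).congr_fun (fun x _ => by
    simp only [ofReal_exp, ofReal_neg, smul_eq_mul, mul_comm]) measurableSet_Ioi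

lemma mellinInv_Gamma {σ : ℝ} (hσ : 0 < σ) {x : ℝ} (hx : 0 < x) :
    mellinInv σ Gamma x = Real.exp (-x) := by
  have hline (y : ℝ) : 0 < ((σ : ℂ) + y * I).re := by simpa using hσ
  have hGamma (y : ℝ) :
      mellin (fun x : ℝ => (Real.exp (-x) : ℂ)) (σ + y * I) = Gamma (σ + y * I) :=
    mellin_exp_neg (hline y)
  have hmellin : VerticalIntegrable (mellin fun x : ℝ => (Real.exp (-x) : ℂ)) σ :=
    (verticalIntegrable_Gamma hσ).congr (Eventually.of_forall fun y => (hGamma y).symm)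
  rw [← mellinInv_mellin_eq σ _ hx (by simpa using mellinConvergent_exp_neg (hline 0)) hmellin
    (by fun_prop)]
  simp only [mellinInv, hGamma]

lemma VerticalIntegrable.tendsto_intervalIntegral_mellinInv {E : Type*}
    [NormedAddCommGroup E] [NormedSpace ℂ E] {F : ℂ → E} {σ : ℝ} (hF : VerticalIntegrable F σ)
    {x : ℝ} (hx : 0 < x) :
    Tendsto (fun T : ℝ =>
        (1 / (2 * Real.pi)) • ∫ y in (-T)..T, (x : ℂ) ^ (-(σ + y * I)) • F (σ + y * I))
      atTop (𝓝 (mellinInv σ F x)) := by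
  have hint : Integrable fun y : ℝ => (x : ℂ) ^ (-(σ + y * I)) • F (σ + y * I) := by
    refine (hF.norm.const_mul (x ^ (-σ))).mono'
      (((continuous_const.add (by fun_prop)).neg.const_cpow
        (.inl (ofReal_ne_zero.2 hx.ne'))).aestronglyMeasurable.smul hF.aestronglyMeasurable)
      (Eventually.of_forall fun y => ?_)
    rw [norm_smul, norm_cpow_eq_rpow_re_of_pos hx]
    simp
  exact (intervalIntegral_tendsto_integral hint tendsto_neg_atTop_atBot tendsto_id).const_smul _

end Complex

/-- Inverse Mellin transform of the Gamma function: for `a > 0` and `σ > 0`,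
`e^{-a} = (1/(2πi)) ∫_{σ-i∞}^{σ+i∞} a^{-t} Γ(t) dt`, understood as the limit of
the contour integrals along `Re t = σ` from `σ - iT` to `σ + iT`. -/
theorem stmt0 (a σ : ℝ) (ha : 0 < a) (hσ : 0 < σ) :
    Tendsto (fun T : ℝ =>
        (1 / (2 * Real.pi * Complex.I)) *
          ∫ y in (-T)..T, (a : ℂ) ^ (-((σ : ℂ) + y * Complex.I)) *
            Complex.Gamma ((σ : ℂ) + y * Complex.I) * Complex.I)
      atTop (nhds ((Real.exp (-a) : ℝ) : ℂ)) := by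
  have h := (verticalIntegrable_Gamma hσ).tendsto_intervalIntegral_mellinInv ha
  rw [mellinInv_Gamma hσ ha] at h
  refine h.congr fun T => ?_
  simp only [smul_eq_mul, real_smul, intervalIntegral.integral_mul_const]
  generalize ∫ y in (-T)..T, (a : ℂ) ^ (-((σ : ℂ) + y * I)) * Gamma (σ + y * I) = J
  have hπ : (Real.pi : ℂ) ≠ 0 := ofReal_ne_zero.2 Real.pi_ne_zero
  push_cast
  field_simp [I_ne_zero]
end

section
/- Let (E_i)_{i≥0} be as above with minimum E₀, β > 0, V > 0, and define ρ(z) := (1/V) Σ_i 1/(z^{-1}e^{βE_i} - 1) for 0 < z < e^{βE₀}. Then for any 0 < z₂ < z₁ < e^{βE₀}: ρ(z₂)/z₂ ≤ (ρ(z₁) - ρ(z₂))/(z₁ - z₂) ≤ ρ(z₁)/(z₁(1 - z₁ e^{-βE₀})). -/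
/-!
With `aᵢ = e^{βEᵢ}`, the `i`-th term of `ρ` is `z / (aᵢ - z)`, and all three quantities compared
are linear in `ρ`, so it suffices to bound a single term. Its chord slope `a / ((a - z₁)(a - z₂))`
lies above `1 / (a - z₂)`, the term divided by `z₂`, and below `a / (a - z₁)²`, its derivative at
`z₁`; the latter is `1 / ((a - z₁)(1 - z₁/a))`, at most `1 / ((a - z₁)(1 - z₁/a₀))` as `a₀ ≤ a`.
-/

theorem mul_tsum_slope_bounds {ι : Type*} {f : ι → ℝ → ℝ} {x y c D : ℝ} (hc : 0 ≤ c)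
    (hx : Summable fun i => f i x) (hy : Summable fun i => f i y)
    (hlow : ∀ i, f i y / y ≤ (f i x - f i y) / (x - y))
    (hup : ∀ i, (f i x - f i y) / (x - y) ≤ f i x / D) :
    (c * ∑' i, f i y) / y ≤ (c * ∑' i, f i x - c * ∑' i, f i y) / (x - y) ∧
    (c * ∑' i, f i x - c * ∑' i, f i y) / (x - y) ≤ (c * ∑' i, f i x) / D := by
  have hdiv : ∀ z d, (c * ∑' i, f i z) / d = c * ∑' i, f i z / d := fun z d => by
    rw [tsum_div_const]; ring
  have hslope : (c * ∑' i, f i x - c * ∑' i, f i y) / (x - y) =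
      c * ∑' i, (f i x - f i y) / (x - y) := by
    rw [tsum_div_const, hx.tsum_sub hy]; ring
  have hslope_summable : Summable fun i => (f i x - f i y) / (x - y) := (hx.sub hy).div_const _
  rw [hdiv, hdiv, hslope]
  exact ⟨mul_le_mul_of_nonneg_left ((hy.div_const y).tsum_le_tsum hlow hslope_summable) hc,
    mul_le_mul_of_nonneg_left (hslope_summable.tsum_le_tsum hup (hx.div_const D)) hc⟩

theorem summable_div_sub {ι : Type*} {a : ι → ℝ} {m z : ℝ} (hz : 0 ≤ z) (hzm : z < m)
    (hm : ∀ i, m ≤ a i) (ha : Summable fun i => (a i)⁻¹) : Summable fun i => z / (a i - z) := by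
  refine (ha.mul_left (z * m / (m - z))).of_nonneg_of_le
    (fun i => div_nonneg hz (by linarith [hm i])) (fun i => ?_)
  rw [← div_eq_mul_inv, div_div, div_le_div_iff₀ (by linarith [hm i])
    (mul_pos (by linarith) (by linarith [hm i]))]
  nlinarith [mul_le_mul_of_nonneg_left (hm i) (mul_nonneg hz hz)]

theorem inv_inv_mul_sub_one {z : ℝ} (a : ℝ) (hz : z ≠ 0) : (z⁻¹ * a - 1)⁻¹ = z / (a - z) := by
  rw [show z⁻¹ * a - 1 = (a - z) / z by field_simp, inv_div]

theorem div_sub_slope {a z₁ z₂ : ℝ} (h : z₁ ≠ z₂) (h₁ : a ≠ z₁) (h₂ : a ≠ z₂) :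
    (z₁ / (a - z₁) - z₂ / (a - z₂)) / (z₁ - z₂) = a / ((a - z₁) * (a - z₂)) := by
  have : a - z₁ ≠ 0 := sub_ne_zero.2 h₁
  have : a - z₂ ≠ 0 := sub_ne_zero.2 h₂
  have : z₁ - z₂ ≠ 0 := sub_ne_zero.2 h
  field_simp
  ring

theorem div_sub_slope_bounds {a m z₁ z₂ : ℝ} (h2 : 0 < z₂) (h21 : z₂ < z₁) (h1 : z₁ < m)
    (hm : m ≤ a) :
    z₂ / (a - z₂) / z₂ ≤ (z₁ / (a - z₁) - z₂ / (a - z₂)) / (z₁ - z₂) ∧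
    (z₁ / (a - z₁) - z₂ / (a - z₂)) / (z₁ - z₂) ≤ z₁ / (a - z₁) / (z₁ * (1 - z₁ * m⁻¹)) := by
  have hm0 : 0 < m := by linarith
  have hd₁ : 0 < a - z₁ := by linarith
  have hd₂ : 0 < a - z₂ := by linarith
  have hK : 0 < 1 - z₁ * m⁻¹ := by
    rw [sub_pos, ← div_eq_mul_inv, div_lt_one hm0]; exact h1
  rw [div_sub_slope h21.ne' (by linarith) (by linarith)]
  constructor
  · rw [div_div_cancel_left' h2.ne', inv_eq_one_div, div_le_div_iff₀ hd₂ (by positivity)]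
    nlinarith
  · have hz₁a : z₁ ≤ z₁ * (a * m⁻¹) :=
      le_mul_of_one_le_right (by linarith) ((one_le_div hm0).2 hm |>.trans_eq (div_eq_mul_inv _ _))
    have key : a * (1 - z₁ * m⁻¹) ≤ a - z₂ := by nlinarith
    rw [div_div, div_le_div_iff₀ (mul_pos hd₁ hd₂) (mul_pos hd₁ (mul_pos (h2.trans h21) hK))]
    nlinarith [mul_le_mul_of_nonneg_left key (mul_pos hd₁ (h2.trans h21)).le]

theorem stmt8_general (E : ℕ → ℝ) (hmono : Monotone E) (β V : ℝ) (hβ : 0 < β)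
    (hV : 0 < V) (htrace : Summable fun i => Real.exp (-β * E i))
    (z₁ z₂ : ℝ) (h2 : 0 < z₂) (h21 : z₂ < z₁) (h1 : z₁ < Real.exp (β * E 0))
    (ρ : ℝ → ℝ)
    (hρ : ∀ z : ℝ, ρ z = (1 / V) * ∑' i : ℕ, (z⁻¹ * Real.exp (β * E i) - 1)⁻¹) :
    ρ z₂ / z₂ ≤ (ρ z₁ - ρ z₂) / (z₁ - z₂) ∧
    (ρ z₁ - ρ z₂) / (z₁ - z₂) ≤ ρ z₁ / (z₁ * (1 - z₁ * Real.exp (-β * E 0))) := by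
  set a : ℕ → ℝ := fun i => Real.exp (β * E i)
  have ha0 : ∀ i, a 0 ≤ a i := fun i =>
    Real.exp_le_exp.2 (mul_le_mul_of_nonneg_left (hmono i.zero_le) hβ.le)
  have ha_inv : Summable fun i => (a i)⁻¹ := by simpa [a, neg_mul, Real.exp_neg] using htrace
  have hρ_div : ∀ z, 0 < z → ρ z = (1 / V) * ∑' i, z / (a i - z) := fun z hz => by
    simp only [hρ, inv_inv_mul_sub_one _ hz.ne', a]
  have hz₁ : 0 < z₁ := h2.trans h21
  have hbounds := fun i => div_sub_slope_bounds h2 h21 h1 (ha0 i)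
  rw [hρ_div z₁ hz₁, hρ_div z₂ h2, neg_mul, Real.exp_neg]
  exact mul_tsum_slope_bounds (f := fun i z => z / (a i - z)) (c := 1 / V) (by positivity)
    (summable_div_sub hz₁.le h1 ha0 ha_inv) (summable_div_sub h2.le (h21.trans h1) ha0 ha_inv)
    (fun i => (hbounds i).1) (fun i => (hbounds i).2)

/-- Convexity inequality for the Bose gas density `ρ(z) = (1/V) Σ_i 1/(z⁻¹e^{βE_i}-1)`:
for `0 < z₂ < z₁ < e^{βE₀}`,
`ρ(z₂)/z₂ ≤ (ρ(z₁)-ρ(z₂))/(z₁-z₂) ≤ ρ(z₁)/(z₁(1-z₁e^{-βE₀}))`. -/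
theorem stmt8 (E : ℕ → ℝ) (h0 : 0 ≤ E 0) (hmono : Monotone E) (β V : ℝ) (hβ : 0 < β)
    (hV : 0 < V) (htrace : Summable fun i => Real.exp (-β * E i))
    (z₁ z₂ : ℝ) (h2 : 0 < z₂) (h21 : z₂ < z₁) (h1 : z₁ < Real.exp (β * E 0))
    (ρ : ℝ → ℝ)
    (hρ : ∀ z : ℝ, ρ z = (1 / V) * ∑' i : ℕ, (z⁻¹ * Real.exp (β * E i) - 1)⁻¹) :
    ρ z₂ / z₂ ≤ (ρ z₁ - ρ z₂) / (z₁ - z₂) ∧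
    (ρ z₁ - ρ z₂) / (z₁ - z₂) ≤ ρ z₁ / (z₁ * (1 - z₁ * Real.exp (-β * E 0))) :=
  stmt8_general E hmono β V hβ hV htrace z₁ z₂ h2 h21 h1 ρ hρ
end
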